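/- Let E be a Hausdorff real topological vector space, X ⊆ E, n ≥ 2, and φ : X_[n] → E a convex selection that is continuous at the set {x, x₀} ∈ X_[n], where x ≠ x₀ are points of X. Suppose f^x : X_[n-1] → [0,1] and a convex selection φ^x : X_[n-1] → E satisfy φ(A ∪ {x}) = f^x(A)x + (1 - f^x(A))φ^x(A) for all A ∈ X_[n-1]. If A_λ → {x₀} in the Vietoris topology on X_[n-1], then f^x(A_λ) → f^x({x₀}). -/

import Mathlib

open Filter Topology

/-- The Vietoris topology on the powerset of a topological space. -/
def vietorisTopology (Y : Type*) [TopologicalSpace Y] : TopologicalSpace (Set Y) :=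
  TopologicalSpace.generateFrom
    ({S | ∃ U : Set Y, IsOpen U ∧ S = {A : Set Y | A ⊆ U}} ∪
     {S | ∃ U : Set Y, IsOpen U ∧ S = {A : Set Y | (A ∩ U).Nonempty}})

instance instVietoris {Y : Type*} [TopologicalSpace Y] : TopologicalSpace (Set Y) :=
  vietorisTopology Y

/-- `X_[n]` for `X ⊆ E`, with the subspace topology from the Vietoris topology. -/
abbrev SubsetsLE {E : Type*} [TopologicalSpace E] (X : Set E) (n : ℕ) : Type _ :=
  {A : Set E // A ⊆ X ∧ A.Nonempty ∧ A.Finite ∧ A.ncard ≤ n}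

lemma tendsto_vietoris_iff {Y : Type*} [TopologicalSpace Y] {ι : Type*} {F : Filter ι}
    {A : ι → Set Y} {S : Set Y} :
    Tendsto A F (𝓝 S) ↔
      (∀ U : Set Y, IsOpen U → S ⊆ U → ∀ᶠ i in F, A i ⊆ U) ∧
      (∀ U : Set Y, IsOpen U → (S ∩ U).Nonempty → ∀ᶠ i in F, (A i ∩ U).Nonempty) := by
  rw [show (𝓝 S) = @nhds (Set Y) (TopologicalSpace.generateFrom _) S from rfl,
    TopologicalSpace.tendsto_nhds_generateFrom_iff]
  constructor
  · intro h
    exact ⟨fun U hU hSU => h _ (Or.inl ⟨U, hU, rfl⟩) hSU,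
           fun U hU hSU => h _ (Or.inr ⟨U, hU, rfl⟩) hSU⟩
  · rintro ⟨h1, h2⟩ s (⟨U, hU, rfl⟩ | ⟨U, hU, rfl⟩) hSs
    · exact h1 U hU hSs
    · exact h2 U hU hSs

lemma sum_small {E : Type*} [AddCommGroup E] [Module ℝ E] [TopologicalSpace E]
    [IsTopologicalAddGroup E] [ContinuousSMul ℝ E] (N : ℕ) {W : Set E} (hW : W ∈ 𝓝 (0 : E)) :
    ∃ V ∈ 𝓝 (0 : E), Balanced ℝ V ∧
      ∀ (s : Finset E) (g : E → E), s.card ≤ N → (∀ y ∈ s, g y ∈ V) → ∑ y ∈ s, g y ∈ W := by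
  classical
  induction N generalizing W with
  | zero =>
    refine ⟨balancedCore ℝ W, balancedCore_mem_nhds_zero hW, balancedCore_balanced _, ?_⟩
    intro s g hcard _
    rw [Finset.card_eq_zero.mp (Nat.le_zero.mp hcard)]
    simpa using mem_of_mem_nhds hW
  | succ N IH =>
    obtain ⟨U, hU, hUadd⟩ := exists_nhds_zero_half hW
    obtain ⟨V₁, hV₁, hV₁b, hV₁sum⟩ := IH hU
    refine ⟨V₁ ∩ balancedCore ℝ U, Filter.inter_mem hV₁ (balancedCore_mem_nhds_zero hU),
      hV₁b.inter (balancedCore_balanced _), ?_⟩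
    intro s g hcard hg
    rcases s.eq_empty_or_nonempty with rfl | ⟨a, ha⟩
    · simpa using mem_of_mem_nhds hW
    · rw [← Finset.add_sum_erase _ _ ha]
      refine hUadd _ (balancedCore_subset U (hg a ha).2) _ ?_
      refine hV₁sum _ _ ?_ fun y hy => (hg y (Finset.mem_of_mem_erase hy)).1
      rw [Finset.card_erase_of_mem ha]; omega

lemma convexHull_small {E : Type*} [AddCommGroup E] [Module ℝ E] [TopologicalSpace E]
    [IsTopologicalAddGroup E] [ContinuousSMul ℝ E] (N : ℕ) (x₀ : E) {W : Set E}
    (hW : W ∈ 𝓝 x₀) :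
    ∃ U : Set E, IsOpen U ∧ x₀ ∈ U ∧
      ∀ s : Set E, s.Finite → s.ncard ≤ N → s ⊆ U → convexHull ℝ s ⊆ W := by
  classical
  have hW0 : {e : E | x₀ + e ∈ W} ∈ 𝓝 (0 : E) := by
    have h : Tendsto (fun e : E => x₀ + e) (𝓝 0) (𝓝 x₀) := by
      simpa using (continuous_add_left x₀).tendsto (0 : E)
    exact h hW
  obtain ⟨V, hV, hVb, hVsum⟩ := sum_small N hW0
  have hU' : {y : E | y - x₀ ∈ V} ∈ 𝓝 x₀ := by
    have h : Tendsto (fun y : E => y - x₀) (𝓝 x₀) (𝓝 0) := by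
      simpa using (continuous_sub_right x₀).tendsto x₀
    exact h hV
  obtain ⟨U, hUsub, hUo, hx₀U⟩ := mem_nhds_iff.mp hU'
  refine ⟨U, hUo, hx₀U, ?_⟩
  intro s hs hcard hsU c hc
  rw [show s = ((hs.toFinset : Finset E) : Set E) from hs.coe_toFinset.symm] at hc
  obtain ⟨w, hw0, hw1, hwc⟩ := Finset.mem_convexHull'.mp hc
  have hkey : c = x₀ + ∑ y ∈ hs.toFinset, w y • (y - x₀) := by
    have h2 : ∑ y ∈ hs.toFinset, w y • (y - x₀)
        = (∑ y ∈ hs.toFinset, w y • y) - (∑ y ∈ hs.toFinset, w y) • x₀ := by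
      rw [Finset.sum_smul, ← Finset.sum_sub_distrib]
      simp [smul_sub]
    rw [h2, hw1, hwc, one_smul]; abel
  rw [hkey]
  refine hVsum hs.toFinset _ (by rwa [Set.ncard_eq_toFinset_card s hs] at hcard) fun y hy => ?_
  refine hVb.smul_mem ?_ (hUsub (hsU (hs.mem_toFinset.mp hy)))
  rw [Real.norm_eq_abs, abs_of_nonneg (hw0 y hy)]
  calc w y ≤ ∑ z ∈ hs.toFinset, w z := Finset.single_le_sum (fun z hz => hw0 z hz) hy
    _ = 1 := hw1

/-- If `φ : X_[n] → E` is a convex selection continuous at `{x, x₀}` (`x ≠ x₀`), and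
`f^x, φ^x` slice `φ` through `x`, then `f^x` is continuous at `{x₀}`: whenever a net
`A_λ → {x₀}` in the Vietoris topology, `f^x(A_λ) → f^x({x₀})`. -/
theorem slice_coefficient_continuousAt
    {E : Type*} [AddCommGroup E] [Module ℝ E] [TopologicalSpace E] [T2Space E]
    [IsTopologicalAddGroup E] [ContinuousSMul ℝ E]
    (X : Set E) (n : ℕ) (hn : 2 ≤ n) (x x₀ : E) (hx : x ∈ X) (hx₀ : x₀ ∈ X)
    (hxx₀ : x ≠ x₀)
    (φ : SubsetsLE X n → E)
    (hφ : ∀ A : SubsetsLE X n, φ A ∈ convexHull ℝ (A : Set E))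
    (hφcont : ContinuousAt φ ⟨{x, x₀}, by
        rw [Set.insert_subset_iff]; exact ⟨hx, Set.singleton_subset_iff.mpr hx₀⟩,
      ⟨x, Set.mem_insert _ _⟩, (Set.finite_singleton x₀).insert x, by
        rw [Set.ncard_pair hxx₀]; exact hn⟩)
    (f : SubsetsLE X (n - 1) → ℝ) (hf : ∀ A, f A ∈ Set.Icc (0 : ℝ) 1)
    (φx : SubsetsLE X (n - 1) → E)
    (hφx : ∀ A : SubsetsLE X (n - 1), φx A ∈ convexHull ℝ (A : Set E))
    (hslice : ∀ (A : SubsetsLE X (n - 1))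
      (hA : ((A : Set E) ∪ {x}) ⊆ X ∧ ((A : Set E) ∪ {x}).Nonempty ∧
        ((A : Set E) ∪ {x}).Finite ∧ ((A : Set E) ∪ {x}).ncard ≤ n),
      φ ⟨(A : Set E) ∪ {x}, hA⟩ = f A • x + (1 - f A) • φx A) :
    ∀ {ι : Type} (F : Filter ι), F.NeBot → ∀ A : ι → SubsetsLE X (n - 1),
      Tendsto A F (𝓝 ⟨{x₀}, Set.singleton_subset_iff.mpr hx₀, Set.singleton_nonempty x₀,
        Set.finite_singleton x₀, by rw [Set.ncard_singleton]; omega⟩) →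
      Tendsto (fun i => f (A i)) F
        (𝓝 (f ⟨{x₀}, Set.singleton_subset_iff.mpr hx₀, Set.singleton_nonempty x₀,
          Set.finite_singleton x₀, by rw [Set.ncard_singleton]; omega⟩)) := by
  intro ι F hF A hA
  set p₀ : SubsetsLE X (n - 1) := ⟨{x₀}, Set.singleton_subset_iff.mpr hx₀,
    Set.singleton_nonempty x₀, Set.finite_singleton x₀, by rw [Set.ncard_singleton]; omega⟩
  set f₀ : ℝ := f p₀ with hf₀
  rw [tendsto_subtype_rng, tendsto_vietoris_iff] at hA
  obtain ⟨hAup, hAlow⟩ := hA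
  -- the sets A i ∪ {x}
  have hBmem : ∀ i, ((A i : Set E) ∪ {x}) ⊆ X ∧ ((A i : Set E) ∪ {x}).Nonempty ∧
      ((A i : Set E) ∪ {x}).Finite ∧ ((A i : Set E) ∪ {x}).ncard ≤ n := by
    intro i
    refine ⟨Set.union_subset (A i).2.1 (Set.singleton_subset_iff.mpr hx),
      Set.Nonempty.inr (Set.singleton_nonempty x), (A i).2.2.2.1.union (Set.finite_singleton x),
      le_trans (Set.ncard_union_le _ _) ?_⟩
    rw [Set.ncard_singleton]
    have := (A i).2.2.2.2
    omega
  set B : ι → SubsetsLE X n := fun i => ⟨(A i : Set E) ∪ {x}, hBmem i⟩ with hBdef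
  -- the pair {x, x₀}
  have hpair : ({x, x₀} : Set E) ⊆ X ∧ ({x, x₀} : Set E).Nonempty ∧
      ({x, x₀} : Set E).Finite ∧ ({x, x₀} : Set E).ncard ≤ n := by
    refine ⟨?_, ⟨x, Set.mem_insert _ _⟩, (Set.finite_singleton x₀).insert x, ?_⟩
    · rw [Set.insert_subset_iff]; exact ⟨hx, Set.singleton_subset_iff.mpr hx₀⟩
    · rw [Set.ncard_pair hxx₀]; exact hn
  -- B converges to {x, x₀} in the Vietoris topology
  have hB : Tendsto B F (𝓝 (⟨{x, x₀}, hpair⟩ : SubsetsLE X n)) := by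
    rw [tendsto_subtype_rng, tendsto_vietoris_iff]
    constructor
    · intro U hU hsub
      filter_upwards [hAup U hU (Set.singleton_subset_iff.mpr (hsub (Set.mem_insert_of_mem _ rfl)))]
        with i hi
      exact Set.union_subset hi (Set.singleton_subset_iff.mpr (hsub (Set.mem_insert _ _)))
    · rintro U hU ⟨y, hy, hyU⟩
      rcases hy with rfl | rfl
      · exact Filter.Eventually.of_forall fun i => ⟨y, Or.inr rfl, hyU⟩
      · filter_upwards [hAlow U hU ⟨y, rfl, hyU⟩] with i hi
        obtain ⟨z, hz, hzU⟩ := hi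
        exact ⟨z, Or.inl hz, hzU⟩
  -- value of φ at the pair
  have hφxp₀ : φx p₀ = x₀ := by
    have := hφx p₀
    rwa [show ((p₀ : Set E)) = {x₀} from rfl, convexHull_singleton, Set.mem_singleton_iff] at this
  have hpair' : ((p₀ : Set E) ∪ {x}) ⊆ X ∧ ((p₀ : Set E) ∪ {x}).Nonempty ∧
      ((p₀ : Set E) ∪ {x}).Finite ∧ ((p₀ : Set E) ∪ {x}).ncard ≤ n := by
    refine ⟨Set.union_subset p₀.2.1 (Set.singleton_subset_iff.mpr hx),
      Set.Nonempty.inr (Set.singleton_nonempty x), p₀.2.2.2.1.union (Set.finite_singleton x),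
      le_trans (Set.ncard_union_le _ _) ?_⟩
    have h0 : ((p₀ : Set E)).ncard = 1 := Set.ncard_singleton x₀
    rw [h0, Set.ncard_singleton]
    omega
  have hsetpair : ((p₀ : Set E) ∪ {x}) = ({x, x₀} : Set E) := by
    show ({x₀} : Set E) ∪ {x} = {x, x₀}
    rw [Set.union_comm, Set.singleton_union]
  have hφpair : φ ⟨{x, x₀}, hpair⟩ = f₀ • x + (1 - f₀) • x₀ := by
    have h1 := hslice p₀ hpair'
    have h2 : (⟨(p₀ : Set E) ∪ {x}, hpair'⟩ : SubsetsLE X n) = ⟨{x, x₀}, hpair⟩ :=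
      Subtype.ext hsetpair
    rw [h2, hφxp₀] at h1
    exact h1
  -- φ (B i) converges
  have hφB : Tendsto (fun i => φ (B i)) F (𝓝 (f₀ • x + (1 - f₀) • x₀)) := by
    rw [← hφpair]
    exact hφcont.tendsto.comp hB
  have hφBeq : (fun i => φ (B i)) = fun i => f (A i) • x + (1 - f (A i)) • φx (A i) :=
    funext fun i => hslice (A i) (hBmem i)
  rw [hφBeq] at hφB
  -- φx (A i) → x₀
  have hc : Tendsto (fun i => φx (A i)) F (𝓝 x₀) := by
    rw [Filter.tendsto_def]
    intro W hW
    obtain ⟨U, hUo, hx₀U, hU⟩ := convexHull_small (n - 1) x₀ hW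
    filter_upwards [hAup U hUo (Set.singleton_subset_iff.mpr hx₀U)] with i hi
    exact hU _ (A i).2.2.2.1 (A i).2.2.2.2 hi (hφx (A i))
  -- conclude via ultrafilters and compactness of [0,1]
  rw [Filter.tendsto_iff_ultrafilter]
  intro G hG
  haveI : (G : Filter ι).NeBot := G.neBot
  have hGIcc : ↑(G.map fun i => f (A i)) ≤ 𝓟 (Set.Icc (0 : ℝ) 1) := by
    rw [Ultrafilter.coe_map, Filter.le_principal_iff, Filter.mem_map]
    exact Filter.univ_mem' fun i => hf (A i)
  obtain ⟨s₀, _, hs₀⟩ := isCompact_Icc.ultrafilter_le_nhds _ hGIcc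
  have hfs₀ : Tendsto (fun i => f (A i)) (G : Filter ι) (𝓝 s₀) := hs₀
  have h1 : Tendsto (fun i => f (A i) • x + (1 - f (A i)) • φx (A i)) (G : Filter ι)
      (𝓝 (s₀ • x + (1 - s₀) • x₀)) :=
    ((hfs₀.smul tendsto_const_nhds).add
      ((tendsto_const_nhds.sub hfs₀).smul (hc.mono_left hG)))
  have h2 : Tendsto (fun i => f (A i) • x + (1 - f (A i)) • φx (A i)) (G : Filter ι)
      (𝓝 (f₀ • x + (1 - f₀) • x₀)) := hφB.mono_left hG
  have heq : s₀ • x + (1 - s₀) • x₀ = f₀ • x + (1 - f₀) • x₀ := tendsto_nhds_unique h1 h2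
  have hzero : (s₀ - f₀) • (x - x₀) = 0 := by
    have h3 : (s₀ - f₀) • (x - x₀)
        = (s₀ • x + (1 - s₀) • x₀) - (f₀ • x + (1 - f₀) • x₀) := by
      simp only [smul_sub, sub_smul, one_smul]
      abel
    rw [h3, heq, sub_self]
  have hs₀f₀ : s₀ = f₀ := by
    by_contra hne
    have hxsub : x - x₀ = 0 := by
      have h4 := congrArg (fun v => (s₀ - f₀)⁻¹ • v) hzero
      simpa [smul_smul, inv_mul_cancel₀ (sub_ne_zero.mpr hne)] using h4
    exact hxx₀ (sub_eq_zero.mp hxsub)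
  rw [← hs₀f₀]
  exact hfs₀
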